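/- Let τ be a Galton–Watson tree with critical offspring distribution ξ (E(ξ)=1, ξ not identically 1). Then there exists a constant c > 0 such that for all m ≥ 2, P(height(Loop(τ)) ≥ m) ≤ c/m. -/

import Mathlib

/-- A finite rooted plane tree: a root together with an ordered list of subtrees. -/
inductive PlaneTree where
  | node : List PlaneTree → PlaneTree

namespace PlaneTree

/-- The list of children (subtrees) of the root. -/
def children : PlaneTree → List PlaneTree
  | .node ts => ts

mutual
/-- The vertices of a plane tree, encoded as positions (finite sequences of child
indices), listed in depth-first-search (lexicographic) order; the root is `[]`. -/
def positions : PlaneTree → List (List ℕ)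
  | .node ts => [] :: positionsList 0 ts

def positionsList : ℕ → List PlaneTree → List (List ℕ)
  | _, [] => []
  | i, t :: ts => (positions t).map (fun p => i :: p) ++ positionsList (i + 1) ts
end

/-- The subtree rooted at a given position, if the position is present. -/
def subtree? : PlaneTree → List ℕ → Option PlaneTree
  | t, [] => some t
  | t, i :: p =>
    match t.children[i]? with
    | some c => subtree? c p
    | none => none

/-- The outdegree (number of children) of the vertex at position `v`. -/
def out (t : PlaneTree) (v : List ℕ) : ℕ :=
  match t.subtree? v with
  | some c => c.children.length
  | none => 0

/-- The Lukasiewicz path of a plane tree: `W 0 = 0` and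
`W (j+1) = W j + out(u_j) - 1`, `u_j` being the `j`-th vertex in DFS order. -/
def luka (t : PlaneTree) : ℕ → ℤ
  | 0 => 0
  | j + 1 =>
    t.luka j +
      (match t.positions[j]? with
       | some v => (t.out v : ℤ) - 1
       | none => 0)

/-- The height of the tree: the maximal distance from the root, i.e. the maximal
length of a position. -/
def height (t : PlaneTree) : ℕ := (t.positions.map List.length).foldr max 0

/-- Adjacency in the looptree of `t`: two vertices are joined if they are adjacent
siblings, or if one is the parent of the other and the child is the leftmost
(index `0`) or rightmost (index `out - 1`) child of the parent. -/
def loopAdj (t : PlaneTree) (v w : List ℕ) : Prop :=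
  v ∈ t.positions ∧ w ∈ t.positions ∧
    ((∃ u i, v = u ++ [i] ∧ w = u ++ [i + 1]) ∨
      w = v ++ [0] ∨
      w = v ++ [t.out v - 1])

/-- The looptree of `t`, as a simple graph on positions. -/
def loopGraph (t : PlaneTree) : SimpleGraph (List ℕ) :=
  SimpleGraph.fromRel (loopAdj t)

/-- The graph distance from the root in the looptree of `t`. -/
noncomputable def loopDist (t : PlaneTree) (v : List ℕ) : ℕ :=
  (loopGraph t).dist [] v

/-- The height of the looptree of `t`. -/
noncomputable def loopHeight (t : PlaneTree) : ℕ :=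
  (t.positions.map (loopDist t)).foldr max 0

end PlaneTree

namespace PlaneTree

mutual
/-- The Galton–Watson weight (probability) of a finite plane tree with offspring
distribution `π`: the product over all vertices `v` of `π (out v)`. -/
noncomputable def gwWeight (π : ℕ → ENNReal) : PlaneTree → ENNReal
  | .node ts => π ts.length * gwWeightList π ts

noncomputable def gwWeightList (π : ℕ → ENNReal) : List PlaneTree → ENNReal
  | [] => 1
  | t :: ts => gwWeight π t * gwWeightList π ts
end

end PlaneTree

/-!
In the looptree a vertex `v` is reached from the root by going, below each ancestor, first to
its last child and then back along the siblings; so its distance to the root is at most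
`|v| + W(v)`, where `W(v)` is the value of the Lukasiewicz path at `v`, and
`height (Loop τ) ≤ height τ + max W`. Both tails are controlled by the branching property.
With `f` the generating function of `ξ` and `δ = P(ξ ≥ 2)`, criticality gives
`1 - f(1 - y) ≤ y - δ y²`, so `e n = P(height τ ≥ n)` satisfies `1 / e (n + 1) ≥ 1 / e n + δ`
and `e n ≤ 1 / (n δ + 1)`. The Lukasiewicz path is a centred random walk killed at `-1`, so by
the gambler's-ruin argument it reaches `k` with probability at most `1 / (k + 1)`; this is
proved by induction on a bound for the height. Taking `k = m / 2` in both bounds gives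
`P(height (Loop τ) ≥ m) ≤ 4 / (δ m)`.
-/

open scoped ENNReal NNReal

lemma Real.one_add_sq_le_pow_add {x y : ℝ} (hx : 0 ≤ x) (hxy : x + y = 1) (ℓ : ℕ) :
    1 + y ^ 2 ≤ x ^ (ℓ + 2) + (ℓ + 2) * y := by
  induction ℓ with
  | zero => norm_num; nlinarith
  | succ ℓ ih =>
    obtain rfl : x = 1 - y := by linarith
    rw [show (1 - y) ^ (ℓ + 1 + 2) = (1 - y) * (1 - y) ^ (ℓ + 2) by ring]
    push_cast
    nlinarith [mul_le_mul_of_nonneg_left ih hx, mul_nonneg (sq_nonneg y) hx,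
      mul_nonneg (sq_nonneg y) (Nat.cast_nonneg ℓ : (0 : ℝ) ≤ ℓ)]

lemma ENNReal.one_add_sq_le_pow_add {x y : ℝ≥0∞} (hxy : x + y = 1) (ℓ : ℕ) :
    1 + y ^ 2 ≤ x ^ (ℓ + 2) + (ℓ + 2) * y := by
  lift x to ℝ≥0 using ne_top_of_le_ne_top one_ne_top (hxy ▸ le_self_add)
  lift y to ℝ≥0 using ne_top_of_le_ne_top one_ne_top (hxy ▸ le_add_self)
  have hxy' : (x : ℝ) + y = 1 := by exact_mod_cast hxy
  exact_mod_cast Real.one_add_sq_le_pow_add x.2 hxy' ℓ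

lemma ENNReal.natCast_mul_pow_add_one_le {x : ℝ≥0∞} (hx : x ≤ 1) (ℓ : ℕ) :
    ℓ * x ^ ℓ + 1 ≤ x ^ ℓ + ℓ := by
  cases ℓ with
  | zero => simp
  | succ ℓ =>
    have : (ℓ : ℝ≥0∞) * x ^ (ℓ + 1) ≤ ℓ := mul_le_of_le_one_right' (pow_le_one' hx _)
    calc ((ℓ + 1 : ℕ) : ℝ≥0∞) * x ^ (ℓ + 1) + 1 = ℓ * x ^ (ℓ + 1) + x ^ (ℓ + 1) + 1 := by
          push_cast; ring
      _ ≤ ℓ + x ^ (ℓ + 1) + 1 := by gcongr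
      _ = x ^ (ℓ + 1) + ((ℓ + 1 : ℕ) : ℝ≥0∞) := by push_cast; ring

lemma ENNReal.tsum_eq_add_add_tsum (f : ℕ → ℝ≥0∞) : ∑' ℓ, f ℓ = f 0 + f 1 + ∑' ℓ, f (ℓ + 2) := by
  rw [← ENNReal.summable.sum_add_tsum_nat_add' (k := 2)]
  simp [Finset.sum_range_succ]

lemma ENNReal.tsum_pi_prod_eq_prod_tsum {X : Type*} :
    ∀ {n : ℕ} (A : Fin n → X → ℝ≥0∞),
      ∑' f : Fin n → X, ∏ j, A j (f j) = ∏ j, ∑' x, A j x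
  | 0, A => by simp
  | n + 1, A => by
    rw [← (Fin.consEquiv fun _ => X).tsum_eq, ENNReal.tsum_prod', Fin.prod_univ_succ,
      ← tsum_pi_prod_eq_prod_tsum, ← ENNReal.tsum_mul_right]
    refine tsum_congr fun x => ?_
    rw [← ENNReal.tsum_mul_left]
    simp [Fin.consEquiv, Fin.prod_univ_succ]

lemma ENNReal.pow_mul_le_mul_prod {h : ℝ≥0∞} {q : ℕ → ℝ≥0∞}
    (hq : ∀ i : ℕ, i * h ≤ (i + 1) * q i) (k : ℕ) :
    ∀ ℓ : ℕ, h ^ ℓ * (k + 1 - ℓ : ℕ) ≤ (k + 1) * ∏ j ∈ Finset.range ℓ, q (k - j)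
  | 0 => by simp
  | ℓ + 1 => by
    rcases le_or_gt k ℓ with hkℓ | hℓk
    · simp [Nat.sub_eq_zero_of_le (by omega : k + 1 ≤ ℓ + 1)]
    have hcast : ((k + 1 - ℓ : ℕ) : ℝ≥0∞) = (k - ℓ : ℕ) + 1 := by
      rw [← Nat.cast_add_one]; congr 1; omega
    calc h ^ (ℓ + 1) * (k + 1 - (ℓ + 1) : ℕ) = h ^ ℓ * ((k - ℓ : ℕ) * h) := by
          rw [show k + 1 - (ℓ + 1) = k - ℓ by omega, pow_succ]; ring
      _ ≤ h ^ ℓ * (((k - ℓ : ℕ) + 1) * q (k - ℓ)) := mul_le_mul_of_nonneg_left (hq _) zero_le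
      _ = h ^ ℓ * (k + 1 - ℓ : ℕ) * q (k - ℓ) := by rw [hcast]; ring
      _ ≤ (k + 1) * (∏ j ∈ Finset.range ℓ, q (k - j)) * q (k - ℓ) :=
          mul_le_mul_of_nonneg_right (ENNReal.pow_mul_le_mul_prod hq k ℓ) zero_le
      _ = (k + 1) * ∏ j ∈ Finset.range (ℓ + 1), q (k - j) := by
          rw [Finset.prod_range_succ, mul_assoc]

/-- The recursion says `1 / e (n + 1) ≥ 1 / e n + d`. -/
lemma mul_natCast_mul_add_one_le_one {e : ℕ → ℝ} {d : ℝ} (hd : 0 ≤ d) (he : ∀ n, 0 ≤ e n)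
    (he₀ : e 0 ≤ 1) (hrec : ∀ n, e (n + 1) ≤ e n - d * e n ^ 2) (n : ℕ) :
    e n * (n * d + 1) ≤ 1 := by
  induction n with
  | zero => simpa using he₀
  | succ n ih =>
    have hx := he n
    have hx' := he (n + 1)
    have hr := hrec n
    have hdx : 0 ≤ d * e n := mul_nonneg hd hx
    have hstep : e (n + 1) * (1 + d * e n) ≤ e n := by
      nlinarith [mul_le_mul_of_nonneg_right hr (by linarith : 0 ≤ 1 + d * e n),
        mul_nonneg (mul_nonneg hdx hdx) hx]
    have hmul : e n * (e (n + 1) * ((n + 1 : ℕ) * d + 1)) ≤ e n * 1 := by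
      push_cast; nlinarith [mul_nonneg hx hx']
    rcases hx.lt_or_eq with hpos | hzero
    · exact le_of_mul_le_mul_left hmul hpos
    · have : e (n + 1) = 0 := by nlinarith
      simp [this]

lemma add_le_div_of_mul_le_one {a b δ : ℝ} {m : ℕ} (hm : 2 ≤ m) (hδ₀ : 0 < δ) (hδ₁ : δ ≤ 1)
    (ha₀ : 0 ≤ a) (hb₀ : 0 ≤ b)
    (ha : a * ((m / 2 : ℕ) * δ + 1) ≤ 1) (hb : b * ((m / 2 : ℕ) + 1) ≤ 1) :
    a + b ≤ 4 / δ / m := by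
  set k : ℝ := ((m / 2 : ℕ) : ℝ)
  have hk : (m : ℝ) ≤ 2 * (k + 1) := by
    have : m ≤ 2 * (m / 2 + 1) := by omega
    simpa [k] using (Nat.cast_le (α := ℝ)).2 this
  have h₁ : a * (δ * m) ≤ 2 := by
    nlinarith [mul_le_mul_of_nonneg_left hk (mul_nonneg ha₀ hδ₀.le)]
  have h₂ : b * (δ * m) ≤ 2 := by
    nlinarith [mul_le_mul_of_nonneg_left hk hb₀,
      mul_le_mul_of_nonneg_left hδ₁ (mul_nonneg hb₀ (Nat.cast_nonneg m : (0 : ℝ) ≤ m))]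
  rw [div_div, le_div_iff₀ (by positivity)]
  linarith

lemma List.foldr_max_zero_lt_iff {l : List ℕ} (hl : l ≠ []) {n : ℕ} :
    l.foldr max 0 < n ↔ ∀ x ∈ l, x < n := by
  refine ⟨fun h x hx => (List.le_max_of_le hx le_rfl).trans_lt h, fun h => ?_⟩
  obtain ⟨x, hx⟩ := List.exists_mem_of_ne_nil l hl
  have := h x hx
  have : l.foldr max 0 ≤ n - 1 := List.max_le_of_forall_le _ _ fun y hy => by
    have := h y hy; omega
  omega

namespace PlaneTree

lemma node_children (t : PlaneTree) : node t.children = t := by cases t; rfl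

lemma mem_positionsList {ts : List PlaneTree} {i : ℕ} {v : List ℕ} :
    v ∈ positionsList i ts ↔
      ∃ j p c, v = (i + j) :: p ∧ ts[j]? = some c ∧ p ∈ c.positions := by
  induction ts generalizing i with
  | nil => simp [positionsList]
  | cons t ts ih =>
    simp only [positionsList, List.mem_append, List.mem_map, ih]
    constructor
    · rintro (⟨p, hp, rfl⟩ | ⟨j, p, c, rfl, hc, hp⟩)
      · exact ⟨0, p, t, rfl, rfl, hp⟩
      · exact ⟨j + 1, p, c, by rw [Nat.add_right_comm, Nat.add_assoc], hc, hp⟩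
    · rintro ⟨_ | j, p, c, rfl, hc, hp⟩
      · cases hc
        exact .inl ⟨p, hp, rfl⟩
      · exact .inr ⟨j, p, c, by rw [Nat.add_right_comm, Nat.add_assoc], hc, hp⟩

lemma mem_positions_node {ts : List PlaneTree} {v : List ℕ} :
    v ∈ (node ts).positions ↔
      v = [] ∨ ∃ j p c, v = j :: p ∧ ts[j]? = some c ∧ p ∈ c.positions := by
  simp only [positions, List.mem_cons, mem_positionsList, Nat.zero_add]

lemma nil_mem_positions (t : PlaneTree) : [] ∈ t.positions := by
  cases t
  exact mem_positions_node.2 (.inl rfl)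

lemma cons_mem_positions {ts : List PlaneTree} {j : ℕ} {p : List ℕ} {c : PlaneTree}
    (hc : ts[j]? = some c) (hp : p ∈ c.positions) : j :: p ∈ (node ts).positions :=
  mem_positions_node.2 (.inr ⟨j, p, c, rfl, hc, hp⟩)

lemma out_cons {ts : List PlaneTree} {j : ℕ} {c : PlaneTree} (hc : ts[j]? = some c)
    (p : List ℕ) : (node ts).out (j :: p) = c.out p := by
  simp [out, subtree?, children, hc]

/-- `rightSiblings v t` is the value of the Lukasiewicz path of `t` at the vertex `v`: the
number of younger siblings of `v` and of its ancestors. -/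
def rightSiblings : List ℕ → PlaneTree → ℕ
  | [], _ => 0
  | i :: p, t =>
    (t.children.length - 1 - i) +
      match t.children[i]? with
      | some c => rightSiblings p c
      | none => 0

def maxRightSiblings (t : PlaneTree) : ℕ :=
  (t.positions.map (rightSiblings · t)).foldr max 0

lemma rightSiblings_cons {ts : List PlaneTree} {j : ℕ} {c : PlaneTree} (hc : ts[j]? = some c)
    (p : List ℕ) : rightSiblings (j :: p) (node ts) = (ts.length - 1 - j) + rightSiblings p c := by
  simp [rightSiblings, children, hc]

open SimpleGraph

lemma loopGraph_adj {t : PlaneTree} {v w : List ℕ} (h : loopAdj t v w) (hne : v ≠ w) :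
    (loopGraph t).Adj v w :=
  (fromRel_adj _ _ _).2 ⟨hne, .inl h⟩

lemma singleton_mem_positions {ts : List PlaneTree} {j : ℕ} (hj : j < ts.length) :
    [j] ∈ (node ts).positions :=
  cons_mem_positions (List.getElem?_eq_getElem hj) (nil_mem_positions _)

lemma loopGraph_adj_nil_last {ts : List PlaneTree} (hts : ts ≠ []) :
    (loopGraph (node ts)).Adj [] [ts.length - 1] := by
  have := List.length_pos_iff.2 hts
  exact loopGraph_adj ⟨nil_mem_positions _, singleton_mem_positions (by omega),
    .inr (.inr rfl)⟩ (by simp)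

lemma exists_walk_sibling {ts : List PlaneTree} (j : ℕ) :
    ∀ d, j + d < ts.length → ∃ w : (loopGraph (node ts)).Walk [j + d] [j], w.length = d
  | 0, _ => ⟨.nil, rfl⟩
  | d + 1, h => by
    obtain ⟨w, hw⟩ := exists_walk_sibling (ts := ts) j d (by omega)
    have hadj : (loopGraph (node ts)).Adj [j + d] [j + (d + 1)] :=
      loopGraph_adj ⟨singleton_mem_positions (by omega), singleton_mem_positions h,
        .inl ⟨[], j + d, rfl, rfl⟩⟩ (by simp)
    exact ⟨.cons hadj.symm w, by simp [hw]⟩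

def consHom {ts : List PlaneTree} {j : ℕ} {c : PlaneTree} (hc : ts[j]? = some c) :
    loopGraph c →g loopGraph (node ts) where
  toFun v := j :: v
  map_rel' := by
    have lift : ∀ a b, loopAdj c a b → loopAdj (node ts) (j :: a) (j :: b) := by
      rintro a b ⟨ha, hb, ⟨u, i, rfl, rfl⟩ | rfl | rfl⟩
      · exact ⟨cons_mem_positions hc ha, cons_mem_positions hc hb, .inl ⟨j :: u, i, rfl, rfl⟩⟩
      · exact ⟨cons_mem_positions hc ha, cons_mem_positions hc hb, .inr (.inl rfl)⟩
      · exact ⟨cons_mem_positions hc ha, cons_mem_positions hc hb,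
          .inr (.inr (by rw [out_cons hc]; rfl))⟩
    rintro a b hab
    obtain ⟨hne, h | h⟩ := (fromRel_adj _ _ _).1 hab
    · exact (fromRel_adj _ _ _).2 ⟨by simpa using hne, .inl (lift _ _ h)⟩
    · exact (fromRel_adj _ _ _).2 ⟨by simpa using hne, .inr (lift _ _ h)⟩

/-- To reach `j :: p`, go from the root to the last child, back along the siblings to the
`j`-th child, and then inside its subtree. -/
lemma exists_walk_length_le (v : List ℕ) :
    ∀ t : PlaneTree, v ∈ t.positions →
      ∃ w : (loopGraph t).Walk [] v, w.length ≤ v.length + rightSiblings v t := by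
  induction v with
  | nil => exact fun t _ => ⟨.nil, by simp⟩
  | cons j p ih =>
    rintro ⟨ts⟩ hv
    obtain ⟨c, hc, hp⟩ : ∃ c, ts[j]? = some c ∧ p ∈ c.positions := by
      obtain _ | ⟨j, p, c, h, hc, hp⟩ := mem_positions_node.1 hv
      · contradiction
      · obtain ⟨rfl, rfl⟩ := List.cons.inj h
        exact ⟨c, hc, hp⟩
    have hj : j < ts.length := (List.getElem?_eq_some_iff.1 hc).1
    obtain ⟨w₁, hw₁⟩ := exists_walk_sibling (ts := ts) j (ts.length - 1 - j) (by omega)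
    obtain ⟨w₂, hw₂⟩ := ih c hp
    obtain ⟨w₃, hw₃⟩ : ∃ w : (loopGraph (node ts)).Walk [j] (j :: p), w.length = w₂.length :=
      ⟨w₂.map (consHom hc), Walk.length_map _ _⟩
    have hlast : [ts.length - 1] = [j + (ts.length - 1 - j)] := by congr 1; omega
    refine ⟨.cons (loopGraph_adj_nil_last (List.ne_nil_of_length_pos (by omega)))
      ((w₁.copy hlast.symm rfl).append w₃), ?_⟩
    rw [Walk.length_cons, Walk.length_append, Walk.length_copy,
      rightSiblings_cons hc, List.length_cons]
    omega

lemma loopDist_le {t : PlaneTree} {v : List ℕ} (hv : v ∈ t.positions) :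
    loopDist t v ≤ v.length + rightSiblings v t :=
  let ⟨w, hw⟩ := exists_walk_length_le v t hv
  (dist_le w).trans hw

lemma loopHeight_le_height_add_maxRightSiblings (t : PlaneTree) :
    loopHeight t ≤ t.height + t.maxRightSiblings :=
  List.max_le_of_forall_le _ _ fun _ hx => by
    obtain ⟨v, hv, rfl⟩ := List.mem_map.1 hx
    exact (loopDist_le hv).trans <| add_le_add
      (List.le_max_of_le (List.mem_map_of_mem hv) le_rfl)
      (List.le_max_of_le (List.mem_map_of_mem (f := (rightSiblings · t)) hv) le_rfl)

lemma height_lt_iff {t : PlaneTree} {n : ℕ} :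
    t.height < n ↔ ∀ v ∈ t.positions, v.length < n := by
  rw [height, List.foldr_max_zero_lt_iff (List.ne_nil_of_mem (List.mem_map_of_mem (nil_mem_positions t))),
    List.forall_mem_map]

lemma maxRightSiblings_lt_iff {t : PlaneTree} {k : ℕ} :
    t.maxRightSiblings < k ↔ ∀ v ∈ t.positions, rightSiblings v t < k := by
  rw [maxRightSiblings, List.foldr_max_zero_lt_iff (List.ne_nil_of_mem (List.mem_map_of_mem
    (f := (rightSiblings · t)) (nil_mem_positions t))), List.forall_mem_map]

lemma forall_mem_positions_node_ofFn {ℓ : ℕ} {f : Fin ℓ → PlaneTree} {P : List ℕ → Prop} :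
    (∀ v ∈ (node (List.ofFn f)).positions, P v) ↔
      P [] ∧ ∀ j : Fin ℓ, ∀ p ∈ (f j).positions, P (j :: p) := by
  simp only [mem_positions_node, List.getElem?_ofFn]
  constructor
  · intro h
    exact ⟨h [] (.inl rfl), fun j p hp => h _ (.inr ⟨j, p, f j, rfl, by simp, hp⟩)⟩
  · rintro ⟨h₀, h⟩ v (rfl | ⟨j, p, c, rfl, hc, hp⟩)
    · exact h₀
    · split_ifs at hc with hj
      cases hc
      exact h ⟨j, hj⟩ p hp

lemma height_node_ofFn_lt_succ_iff {ℓ n : ℕ} {f : Fin ℓ → PlaneTree} :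
    (node (List.ofFn f)).height < n + 1 ↔ ∀ j, (f j).height < n := by
  simp only [height_lt_iff, forall_mem_positions_node_ofFn, List.length_nil, List.length_cons,
    Nat.add_lt_add_iff_right, Nat.zero_lt_succ, true_and]

lemma maxRightSiblings_node_ofFn_lt_iff {ℓ k : ℕ} (hk : 0 < k) {f : Fin ℓ → PlaneTree} :
    (node (List.ofFn f)).maxRightSiblings < k ↔
      ∀ j : Fin ℓ, (f j).maxRightSiblings < k - (ℓ - 1 - j) := by
  have hrs (j : Fin ℓ) (p : List ℕ) :
      rightSiblings (j :: p) (node (List.ofFn f)) = (ℓ - 1 - j) + rightSiblings p (f j) := by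
    rw [rightSiblings_cons (c := f j) (by simp), List.length_ofFn]
  simp only [maxRightSiblings_lt_iff, forall_mem_positions_node_ofFn, hrs]
  refine ⟨fun h j p hp => ?_, fun h => ⟨hk, fun j p hp => ?_⟩⟩
  · have := h.2 j p hp; omega
  · have := h j p hp; omega

def encode : PlaneTree → ℕ
  | node ts => Encodable.encode (ts.map encode)

lemma encode_injective : ∀ {s t : PlaneTree}, encode s = encode t → s = t
  | node ss, node ts, h => by
    rw [encode, encode] at h
    have key : ∀ us : List PlaneTree, (∀ u ∈ us, u ∈ ss) → ∀ vs : List PlaneTree,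
        us.map encode = vs.map encode → us = vs := by
      intro us hus
      induction us with
      | nil => intro vs h; exact (List.map_eq_nil_iff.1 h.symm).symm
      | cons u us ih =>
        rintro (_ | ⟨v, vs⟩) h
        · simp at h
        · simp only [List.map_cons, List.cons.injEq] at h
          have : u ∈ ss := hus u List.mem_cons_self -- for the termination argument
          rw [encode_injective h.1, ih (fun w hw => hus w (List.mem_cons_of_mem _ hw)) vs h.2]
    rw [key ss (fun _ => id) ts (Encodable.encode_injective h)]

instance : Countable PlaneTree := ⟨⟨encode, fun _ _ => encode_injective⟩⟩

lemma tsum_eq_tsum_ofFn (F : PlaneTree → ℝ≥0∞) :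
    ∑' t, F t = ∑' ℓ, ∑' f : Fin ℓ → PlaneTree, F (node (List.ofFn f)) := by
  let e : (Σ ℓ, Fin ℓ → PlaneTree) ≃ PlaneTree :=
    List.equivSigmaTuple.symm.trans ⟨node, children, fun _ => rfl, node_children⟩
  rw [← e.tsum_eq, ENNReal.tsum_sigma']
  rfl

section

variable (π : ℕ → ℝ≥0∞)

lemma gwWeight_ofFn {ℓ : ℕ} (f : Fin ℓ → PlaneTree) :
    gwWeight π (node (List.ofFn f)) = π ℓ * ∏ j, gwWeight π (f j) := by
  have : ∀ ts, gwWeightList π ts = (ts.map (gwWeight π)).prod := by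
    intro ts; induction ts <;> simp [gwWeightList, *]
  rw [gwWeight, this, List.map_ofFn, List.prod_ofFn, List.length_ofFn]
  rfl

noncomputable def gwMass (s : Set PlaneTree) : ℝ≥0∞ := ∑' t, s.indicator (gwWeight π) t

/-- The branching property of Galton–Watson trees. -/
lemma gwMass_eq_tsum_prod (s : Set PlaneTree) (S : ℕ → ℕ → Set PlaneTree)
    (hs : ∀ ℓ (f : Fin ℓ → PlaneTree), node (List.ofFn f) ∈ s ↔ ∀ j : Fin ℓ, f j ∈ S ℓ j) :
    gwMass π s = ∑' ℓ, π ℓ * ∏ j ∈ Finset.range ℓ, gwMass π (S ℓ j) := by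
  rw [gwMass, tsum_eq_tsum_ofFn]
  refine tsum_congr fun ℓ => ?_
  have hterm (f : Fin ℓ → PlaneTree) : s.indicator (gwWeight π) (node (List.ofFn f)) =
      π ℓ * ∏ j : Fin ℓ, (S ℓ j).indicator (gwWeight π) (f j) := by
    by_cases h : ∀ j : Fin ℓ, f j ∈ S ℓ j
    · simp [Set.indicator_of_mem ((hs ℓ f).2 h), Set.indicator_of_mem (h _), gwWeight_ofFn]
    · obtain ⟨j, hj⟩ := not_forall.1 h
      rw [Set.indicator_of_notMem (fun h' => hj ((hs ℓ f).1 h' j)),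
        Finset.prod_eq_zero (Finset.mem_univ j) (Set.indicator_of_notMem hj _), mul_zero]
  simp only [hterm, ENNReal.tsum_mul_left, ENNReal.tsum_pi_prod_eq_prod_tsum, gwMass]
  rw [Fin.prod_univ_eq_prod_range (fun j => ∑' t, (S ℓ j).indicator (gwWeight π) t)]

end

variable {π : ℕ → ℝ≥0∞}

variable (π) in
noncomputable def pgf (x : ℝ≥0∞) : ℝ≥0∞ := ∑' ℓ, π ℓ * x ^ ℓ

variable (π) in
noncomputable def probGeTwo : ℝ≥0∞ := ∑' ℓ, π (ℓ + 2)

lemma probGeTwo_le_one (hsum : ∑' i, π i = 1) : probGeTwo π ≤ 1 :=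
  (ENNReal.tsum_comp_le_tsum_of_injective (add_left_injective 2) π).trans_eq hsum

lemma probGeTwo_pos (hmean : ∑' i : ℕ, (i : ℝ≥0∞) * π i = 1) (hnotone : π 1 < 1) :
    0 < probGeTwo π := by
  refine pos_iff_ne_zero.2 fun h => hnotone.ne ?_
  have hπ : ∀ ℓ, π (ℓ + 2) = 0 := ENNReal.tsum_eq_zero.1 h
  simpa [ENNReal.tsum_eq_add_add_tsum (fun i : ℕ => (i : ℝ≥0∞) * π i), hπ] using hmean

lemma pgf_le_one (hsum : ∑' i, π i = 1) {x : ℝ≥0∞} (hx : x ≤ 1) : pgf π x ≤ 1 :=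
  hsum ▸ ENNReal.tsum_le_tsum fun ℓ => mul_le_of_le_one_right' (pow_le_one' hx ℓ)

lemma pgf_add_eq_tsum (hmean : ∑' i : ℕ, (i : ℝ≥0∞) * π i = 1) (x y : ℝ≥0∞) :
    pgf π x + y = ∑' ℓ, π ℓ * (x ^ ℓ + ℓ * y) := by
  calc pgf π x + y = pgf π x + (∑' ℓ : ℕ, (ℓ : ℝ≥0∞) * π ℓ) * y := by rw [hmean, one_mul]
    _ = _ := by
      rw [pgf, ← ENNReal.tsum_mul_right, ← ENNReal.tsum_add]
      exact tsum_congr fun ℓ => by ring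

/-- Subtraction-free form of `1 - f(1 - y) ≤ y - P(ξ ≥ 2) y²`. -/
lemma one_add_probGeTwo_mul_sq_le (hsum : ∑' i, π i = 1) (hmean : ∑' i : ℕ, (i : ℝ≥0∞) * π i = 1)
    {x y : ℝ≥0∞} (hxy : x + y = 1) : 1 + probGeTwo π * y ^ 2 ≤ pgf π x + y := by
  rw [pgf_add_eq_tsum hmean, ENNReal.tsum_eq_add_add_tsum, ← hsum, ENNReal.tsum_eq_add_add_tsum,
    add_assoc, probGeTwo, ← ENNReal.tsum_mul_right, ← ENNReal.tsum_add]
  simp only [pow_zero, Nat.cast_zero, zero_mul, add_zero, mul_one, pow_one, Nat.cast_one,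
    one_mul, hxy, add_assoc]
  refine add_le_add le_rfl (add_le_add le_rfl (ENNReal.tsum_le_tsum fun ℓ => ?_))
  rw [← mul_one_add]
  push_cast
  exact mul_le_mul_of_nonneg_left (ENNReal.one_add_sq_le_pow_add hxy ℓ) zero_le

lemma tsum_natCast_mul_pow_le_pgf (hsum : ∑' i, π i = 1)
    (hmean : ∑' i : ℕ, (i : ℝ≥0∞) * π i = 1) {x : ℝ≥0∞} (hx : x ≤ 1) :
    ∑' ℓ, π ℓ * (ℓ * x ^ ℓ) ≤ pgf π x := by
  refine (ENNReal.add_le_add_iff_right ENNReal.one_ne_top).1 ?_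
  calc ∑' ℓ, π ℓ * (ℓ * x ^ ℓ) + 1 = ∑' ℓ, π ℓ * (ℓ * x ^ ℓ + 1) := by
        simp only [mul_add, mul_one, ENNReal.tsum_add, hsum]
    _ ≤ ∑' ℓ, π ℓ * (x ^ ℓ + ℓ) :=
        ENNReal.tsum_le_tsum fun ℓ =>
          mul_le_mul_of_nonneg_left (ENNReal.natCast_mul_pow_add_one_le hx ℓ) zero_le
    _ = pgf π x + 1 := by
        rw [pgf_add_eq_tsum hmean]; simp

lemma natCast_mul_pgf_le (hsum : ∑' i, π i = 1) (hmean : ∑' i : ℕ, (i : ℝ≥0∞) * π i = 1)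
    {x : ℝ≥0∞} (hx : x ≤ 1) (k : ℕ) :
    k * pgf π x ≤ ∑' ℓ, π ℓ * (x ^ ℓ * (k + 1 - ℓ : ℕ)) := by
  have hfin : pgf π x ≠ ⊤ := ne_top_of_le_ne_top ENNReal.one_ne_top (pgf_le_one hsum hx)
  refine (ENNReal.add_le_add_iff_right hfin).1 ?_
  calc k * pgf π x + pgf π x = ∑' ℓ, π ℓ * (x ^ ℓ * (k + 1 : ℕ)) := by
        rw [pgf, ← add_one_mul, mul_comm, ← ENNReal.tsum_mul_right]
        push_cast
        exact tsum_congr fun ℓ => by ring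
    _ ≤ ∑' ℓ, (π ℓ * (x ^ ℓ * (k + 1 - ℓ : ℕ)) + π ℓ * (ℓ * x ^ ℓ)) := by
        refine ENNReal.tsum_le_tsum fun ℓ => ?_
        rw [← mul_add, mul_comm (ℓ : ℝ≥0∞), ← mul_add, ← Nat.cast_add]
        have : k + 1 ≤ k + 1 - ℓ + ℓ := by omega
        gcongr
    _ ≤ _ := by
        rw [ENNReal.tsum_add]
        gcongr
        exact tsum_natCast_mul_pow_le_pgf hsum hmean hx

lemma gwMass_mono {s s' : Set PlaneTree} (h : s ⊆ s') : gwMass π s ≤ gwMass π s' :=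
  ENNReal.tsum_le_tsum fun _ => Set.indicator_le_indicator_of_subset h (fun _ => zero_le) _

lemma gwMass_add_gwMass_compl (s : Set PlaneTree) :
    gwMass π s + gwMass π sᶜ = gwMass π Set.univ := by
  simp only [gwMass, ← ENNReal.tsum_add, Set.indicator_self_add_compl_apply, Set.indicator_univ]

lemma gwMass_height_lt_succ (n : ℕ) :
    gwMass π {t | t.height < n + 1} = pgf π (gwMass π {t | t.height < n}) := by
  rw [gwMass_eq_tsum_prod π _ (fun _ _ => {t | t.height < n})
    fun _ _ => height_node_ofFn_lt_succ_iff]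
  simp [pgf]

lemma gwMass_height_lt_succ_maxRightSiblings_lt (n : ℕ) {k : ℕ} (hk : 0 < k) :
    gwMass π {t | t.height < n + 1 ∧ t.maxRightSiblings < k} =
      ∑' ℓ, π ℓ * ∏ j ∈ Finset.range ℓ,
        gwMass π {t | t.height < n ∧ t.maxRightSiblings < k - j} := by
  rw [gwMass_eq_tsum_prod π _
    (fun ℓ j => {t | t.height < n ∧ t.maxRightSiblings < k - (ℓ - 1 - j)}) fun ℓ f => by
      simp only [Set.mem_ofPred_eq, height_node_ofFn_lt_succ_iff,
        maxRightSiblings_node_ofFn_lt_iff hk, forall_and]]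
  exact tsum_congr fun ℓ => congrArg _ (Finset.prod_range_reflect
    (fun j => gwMass π {t | t.height < n ∧ t.maxRightSiblings < k - j}) ℓ)

lemma gwMass_height_lt_le_one (hsum : ∑' i, π i = 1) :
    ∀ n, gwMass π {t | t.height < n} ≤ 1
  | 0 => by simp [gwMass]
  | n + 1 => by
    rw [gwMass_height_lt_succ]
    exact pgf_le_one hsum (gwMass_height_lt_le_one hsum n)

lemma gwMass_univ_eq_iSup : gwMass π Set.univ = ⨆ n, gwMass π {t | t.height < n} := by
  refine le_antisymm ?_ (iSup_le fun n => gwMass_mono (Set.subset_univ _))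
  rw [gwMass, ENNReal.tsum_eq_iSup_sum]
  refine iSup_le fun s => le_iSup_of_le (s.sup height + 1) ?_
  calc ∑ t ∈ s, Set.univ.indicator (gwWeight π) t
      = ∑ t ∈ s, {t | t.height < s.sup height + 1}.indicator (gwWeight π) t :=
        Finset.sum_congr rfl fun t ht => by
          rw [Set.indicator_of_mem (Set.mem_univ t), Set.indicator_of_mem]
          exact Nat.lt_succ_of_le (Finset.le_sup ht)
    _ ≤ _ := ENNReal.sum_le_tsum s

lemma gwMass_le_one (hsum : ∑' i, π i = 1) (s : Set PlaneTree) : gwMass π s ≤ 1 :=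
  (gwMass_mono (Set.subset_univ s)).trans <|
    gwMass_univ_eq_iSup.trans_le (iSup_le (gwMass_height_lt_le_one hsum))

lemma gwMass_ne_top (hsum : ∑' i, π i = 1) (s : Set PlaneTree) : gwMass π s ≠ ⊤ :=
  ne_top_of_le_ne_top ENNReal.one_ne_top (gwMass_le_one hsum s)

lemma toReal_gwMass_add_toReal_gwMass_compl_le_one (hsum : ∑' i, π i = 1) (s : Set PlaneTree) :
    (gwMass π s).toReal + (gwMass π sᶜ).toReal ≤ 1 := by
  rw [← ENNReal.toReal_add (gwMass_ne_top hsum s) (gwMass_ne_top hsum sᶜ),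
    gwMass_add_gwMass_compl]
  exact ENNReal.toReal_le_of_le_ofReal zero_le_one (by simpa using gwMass_le_one hsum _)

lemma toReal_gwMass_le_height_mul_le_one (hsum : ∑' i, π i = 1)
    (hmean : ∑' i : ℕ, (i : ℝ≥0∞) * π i = 1) (n : ℕ) :
    (gwMass π {t | n ≤ t.height}).toReal * (n * (probGeTwo π).toReal + 1) ≤ 1 := by
  set e : ℕ → ℝ := fun n => 1 - (gwMass π {t | t.height < n}).toReal
  have he (n : ℕ) : 0 ≤ e n := sub_nonneg.2 <|
    ENNReal.toReal_le_of_le_ofReal zero_le_one (by simpa using gwMass_le_one hsum _)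
  have hrec (n : ℕ) : e (n + 1) ≤ e n - (probGeTwo π).toReal * e n ^ 2 := by
    have hh := gwMass_height_lt_le_one hsum n
    have key := one_add_probGeTwo_mul_sq_le hsum hmean (add_tsub_cancel_of_le hh)
    rw [← gwMass_height_lt_succ] at key
    have hδ : probGeTwo π ≠ ⊤ := ne_top_of_le_ne_top ENNReal.one_ne_top (probGeTwo_le_one hsum)
    have := ENNReal.toReal_mono (by simp [gwMass_ne_top hsum]) key
    rw [ENNReal.toReal_add (by finiteness) (by finiteness), ENNReal.toReal_add
      (gwMass_ne_top hsum _) (by finiteness), ENNReal.toReal_mul, ENNReal.toReal_pow,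
      ENNReal.toReal_sub_of_le hh ENNReal.one_ne_top, ENNReal.toReal_one] at this
    simp only [e]
    linarith
  have htail : (gwMass π {t | n ≤ t.height}).toReal ≤ e n := by
    have := toReal_gwMass_add_toReal_gwMass_compl_le_one hsum {t | t.height < n}
    simp only [Set.compl_ofPred, not_lt] at this
    simp only [e]
    linarith
  calc _ ≤ e n * (n * (probGeTwo π).toReal + 1) := by gcongr
    _ ≤ 1 := mul_natCast_mul_add_one_le_one ENNReal.toReal_nonneg he (by simp [e]) hrec n

/-- Gambler's ruin: the Lukasiewicz path, a centred walk stopped at `-1`, reaches `k` with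
probability at most `1 / (k + 1)`; the height bound `n` makes the induction go through. -/
lemma natCast_mul_gwMass_height_lt_le (hsum : ∑' i, π i = 1)
    (hmean : ∑' i : ℕ, (i : ℝ≥0∞) * π i = 1) :
    ∀ n k : ℕ, k * gwMass π {t | t.height < n} ≤
      (k + 1) * gwMass π {t | t.height < n ∧ t.maxRightSiblings < k}
  | 0, k => by simp [gwMass]
  | n + 1, 0 => by simp
  | n + 1, k + 1 => by
    set q : ℕ → ℝ≥0∞ := fun i => gwMass π {t | t.height < n ∧ t.maxRightSiblings < i}
    have hh := gwMass_height_lt_le_one hsum n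
    calc ((k + 1 : ℕ) : ℝ≥0∞) * gwMass π {t | t.height < n + 1}
        ≤ ∑' ℓ, π ℓ * (gwMass π {t | t.height < n} ^ ℓ * (k + 1 + 1 - ℓ : ℕ)) := by
          rw [gwMass_height_lt_succ]; exact natCast_mul_pgf_le hsum hmean hh (k + 1)
      _ ≤ ∑' ℓ, π ℓ * ((k + 1 : ℕ) + 1) * ∏ j ∈ Finset.range ℓ, q (k + 1 - j) := by
          refine ENNReal.tsum_le_tsum fun ℓ => ?_
          rw [mul_assoc]
          exact mul_le_mul_of_nonneg_left (ENNReal.pow_mul_le_mul_prod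
            (natCast_mul_gwMass_height_lt_le hsum hmean n) (k + 1) ℓ) zero_le
      _ = _ := by
          rw [gwMass_height_lt_succ_maxRightSiblings_lt n k.succ_pos, ← ENNReal.tsum_mul_left]
          exact tsum_congr fun ℓ => by ring

lemma toReal_gwMass_le_maxRightSiblings_mul_le_one (hsum : ∑' i, π i = 1)
    (hmean : ∑' i : ℕ, (i : ℝ≥0∞) * π i = 1) (k : ℕ) :
    (gwMass π {t | k ≤ t.maxRightSiblings}).toReal * (k + 1) ≤ 1 := by
  set L := gwMass π {t | t.maxRightSiblings < k}
  set G := gwMass π {t | k ≤ t.maxRightSiblings}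
  have hLG : L + G = gwMass π Set.univ := by
    simpa only [Set.compl_ofPred, not_lt] using gwMass_add_gwMass_compl {t | t.maxRightSiblings < k}
  have hkZ : k * gwMass π Set.univ ≤ (k + 1) * L := by
    rw [gwMass_univ_eq_iSup, ENNReal.mul_iSup]
    exact iSup_le fun n => (natCast_mul_gwMass_height_lt_le hsum hmean n k).trans
      (mul_le_mul_of_nonneg_left (gwMass_mono fun t ht => ht.2) zero_le)
  have hZ := gwMass_ne_top hsum Set.univ
  have hG : (k + 1) * G ≤ 1 := by
    refine le_trans ?_ (gwMass_le_one hsum Set.univ)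
    refine (ENNReal.add_le_add_iff_left (ENNReal.mul_ne_top (ENNReal.natCast_ne_top k) hZ)).1 ?_
    calc k * gwMass π Set.univ + (k + 1) * G ≤ (k + 1) * L + (k + 1) * G := by gcongr
      _ = k * gwMass π Set.univ + gwMass π Set.univ := by rw [← mul_add, hLG]; ring
  have := ENNReal.toReal_mono ENNReal.one_ne_top hG
  rwa [ENNReal.toReal_mul, mul_comm, ENNReal.toReal_add (ENNReal.natCast_ne_top k)
    ENNReal.one_ne_top, ENNReal.toReal_natCast, ENNReal.toReal_one] at this

lemma measure_preimage_le_gwMass {Ω : Type*} [MeasurableSpace Ω] (μ : MeasureTheory.Measure Ω)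
    {τ : Ω → PlaneTree} (hlaw : ∀ t, μ {ω | τ ω = t} = gwWeight π t)
    (s : Set PlaneTree) : μ (τ ⁻¹' s) ≤ gwMass π s :=
  calc μ (τ ⁻¹' s) ≤ μ (⋃ t : s, {ω | τ ω = t}) :=
        MeasureTheory.measure_mono fun ω hω => Set.mem_iUnion.2 ⟨⟨τ ω, hω⟩, rfl⟩
    _ ≤ ∑' t : s, μ {ω | τ ω = t} := MeasureTheory.measure_iUnion_le _
    _ = gwMass π s := by simp only [hlaw]; exact tsum_subtype s (gwWeight π)

end PlaneTree

open PlaneTree MeasureTheory ProbabilityTheory in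
/-- Let `τ` be a Galton–Watson tree with critical offspring distribution `ξ ~ π`
(`E ξ = 1`, `ξ` not identically `1`).  Then there is `c > 0` such that for all `m ≥ 2`,
`P(height(Loop(τ)) ≥ m) ≤ c/m`. -/
theorem stmt2 {Ω : Type*} [MeasureSpace Ω] [IsProbabilityMeasure (ℙ : Measure Ω)]
    (π : ℕ → ENNReal) (hsum : ∑' i : ℕ, π i = 1)
    (hmean : ∑' i : ℕ, (i : ENNReal) * π i = 1)
    (hnotone : π 1 < 1)
    (τ : Ω → PlaneTree)
    (hlaw : ∀ t : PlaneTree, ℙ {ω | τ ω = t} = gwWeight π t) :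
    ∃ c : ℝ, 0 < c ∧ ∀ m : ℕ, 2 ≤ m →
      (ℙ {ω | m ≤ loopHeight (τ ω)}).toReal ≤ c / m := by
  have hδ := probGeTwo_le_one hsum
  have hδ₀ : 0 < (probGeTwo π).toReal := ENNReal.toReal_pos
    (probGeTwo_pos hmean hnotone).ne' (ne_top_of_le_ne_top ENNReal.one_ne_top hδ)
  have hδ₁ : (probGeTwo π).toReal ≤ 1 := ENNReal.toReal_le_of_le_ofReal zero_le_one (by simpa using hδ)
  refine ⟨4 / (probGeTwo π).toReal, by positivity, fun m hm => ?_⟩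
  have hsub : {ω | m ≤ loopHeight (τ ω)} ⊆
      τ ⁻¹' {t | m / 2 ≤ t.height} ∪ τ ⁻¹' {t | m / 2 ≤ t.maxRightSiblings} := fun ω hω => by
    have := loopHeight_le_height_add_maxRightSiblings (τ ω)
    simp only [Set.mem_union, Set.mem_preimage, Set.mem_ofPred_eq] at hω ⊢
    omega
  have hle := (measure_mono hsub).trans <| (measure_union_le _ _).trans <|
    add_le_add (measure_preimage_le_gwMass ℙ hlaw _) (measure_preimage_le_gwMass ℙ hlaw _)
  calc (ℙ {ω | m ≤ loopHeight (τ ω)}).toReal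
      ≤ (gwMass π {t | m / 2 ≤ t.height}).toReal +
          (gwMass π {t | m / 2 ≤ t.maxRightSiblings}).toReal := by
        rw [← ENNReal.toReal_add (gwMass_ne_top hsum _) (gwMass_ne_top hsum _)]
        exact ENNReal.toReal_mono (by simp [gwMass_ne_top hsum]) hle
    _ ≤ 4 / (probGeTwo π).toReal / m :=
        add_le_div_of_mul_le_one hm hδ₀ hδ₁ ENNReal.toReal_nonneg ENNReal.toReal_nonneg
          (toReal_gwMass_le_height_mul_le_one hsum hmean _)
          (toReal_gwMass_le_maxRightSiblings_mul_le_one hsum hmean _)
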